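/- arXiv:2103.00038 — 5 statements merged into one kernel-verified Lean document; each statement's English description precedes it below -/
import Mathlib

section
/- Let ν > 2 and set k = √(ν² − 4)/ν, so 0 < k < 1. Then for every x ∈ ℝ, with φ = arcsin(tanh x), one has ∫₀ˣ √(ν² − 2 + 2·cosh(2s)) ds = ν·(F(φ,k) − E(φ,k)) + tanh(x)·√(ν² − 2 + 2·cosh(2x)). -/
open Real

/-!
Since `ν² − 2 + 2 cosh 2s = ν² + 4 sinh² s`, it suffices to differentiate the right-hand side.
The substitution `φ = arcsin (tanh x)` (the Gudermannian) has `dφ/dx = sech x`, and with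
`Q = √(ν² + 4 sinh² x)` the choice of `k` gives `√(1 − k² sin² φ) = Q / (ν cosh x)`. Hence
`ν (F − E)' = ν² / Q − Q sech² x`, while `(tanh x · Q)' = Q sech² x + 4 sinh² x / Q`; the sum is
`(ν² + 4 sinh² x) / Q = Q`, and both sides vanish at `x = 0`.
-/

/-- Incomplete elliptic integral of the first kind. -/
noncomputable def ellipticF (φ k : ℝ) : ℝ :=
  ∫ θ in (0:ℝ)..φ, 1 / Real.sqrt (1 - k ^ 2 * Real.sin θ ^ 2)

/-- Incomplete elliptic integral of the second kind. -/
noncomputable def ellipticE (φ k : ℝ) : ℝ :=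
  ∫ θ in (0:ℝ)..φ, Real.sqrt (1 - k ^ 2 * Real.sin θ ^ 2)

lemma sub_two_add_two_mul_cosh_two_mul (a s : ℝ) :
    a - 2 + 2 * cosh (2 * s) = a + 4 * sinh s ^ 2 := by
  rw [cosh_two_mul, cosh_sq]; ring

lemma one_sub_tanh_sq (t : ℝ) : 1 - tanh t ^ 2 = 1 / cosh t ^ 2 := by
  rw [tanh_eq_sinh_div_cosh, div_pow, eq_div_iff (by positivity), sub_mul,
    div_mul_cancel₀ _ (by positivity), cosh_sq]
  ring

lemma hasDerivAt_tanh (t : ℝ) : HasDerivAt tanh (1 / cosh t ^ 2) t := by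
  have hc := (cosh_pos t).ne'
  rw [show tanh = sinh / cosh from funext tanh_eq_sinh_div_cosh]
  refine ((hasDerivAt_sinh t).div (hasDerivAt_cosh t) hc).congr_deriv ?_
  rw [← sq, ← sq, cosh_sq]; ring

/-- `arcsin ∘ tanh` is the Gudermannian function, whose derivative is `sech`. -/
lemma hasDerivAt_arcsin_tanh (t : ℝ) :
    HasDerivAt (fun y => arcsin (tanh y)) (1 / cosh t) t := by
  have hc := cosh_pos t
  have h := (hasDerivAt_arcsin (neg_one_lt_tanh t).ne' (tanh_lt_one t).ne).comp t
    (hasDerivAt_tanh t)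
  refine h.congr_deriv ?_
  rw [one_sub_tanh_sq, sqrt_div' _ (by positivity), sqrt_one, sqrt_sq hc.le]
  field_simp

lemma hasDerivAt_ellipticE (k φ : ℝ) :
    HasDerivAt (fun φ => ellipticE φ k) (√(1 - k ^ 2 * sin φ ^ 2)) φ := by
  have hcont : Continuous fun θ => √(1 - k ^ 2 * sin θ ^ 2) := by fun_prop
  exact intervalIntegral.integral_hasDerivAt_right (hcont.intervalIntegrable _ _)
    hcont.stronglyMeasurable.stronglyMeasurableAtFilter hcont.continuousAt

lemma hasDerivAt_ellipticF {k : ℝ} (hk : k ^ 2 < 1) (φ : ℝ) :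
    HasDerivAt (fun φ => ellipticF φ k) (1 / √(1 - k ^ 2 * sin φ ^ 2)) φ := by
  have hpos (θ : ℝ) : 0 < √(1 - k ^ 2 * sin θ ^ 2) :=
    sqrt_pos.mpr (by nlinarith [sin_sq_le_one θ, sq_nonneg k])
  have hcont : Continuous fun θ => 1 / √(1 - k ^ 2 * sin θ ^ 2) :=
    continuous_const.div (by fun_prop) fun θ => (hpos θ).ne'
  exact intervalIntegral.integral_hasDerivAt_right (hcont.intervalIntegrable _ _)
    hcont.stronglyMeasurable.stronglyMeasurableAtFilter hcont.continuousAt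

lemma hasDerivAt_ellipticF_sub_ellipticE_arcsin_tanh {k : ℝ} (hk : k ^ 2 < 1) (t : ℝ) :
    HasDerivAt (fun y => ellipticF (arcsin (tanh y)) k - ellipticE (arcsin (tanh y)) k)
      ((1 / √(1 - k ^ 2 * tanh t ^ 2) - √(1 - k ^ 2 * tanh t ^ 2)) / cosh t) t := by
  have hsin : sin (arcsin (tanh t)) = tanh t :=
    sin_arcsin (neg_one_lt_tanh t).le (tanh_lt_one t).le
  have h := ((hasDerivAt_ellipticF hk _).sub (hasDerivAt_ellipticE k _)).comp t
    (hasDerivAt_arcsin_tanh t)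
  rw [hsin] at h
  exact h.congr_deriv (div_eq_mul_one_div _ _).symm

lemma hasDerivAt_sqrt_add_four_mul_sinh_sq {a : ℝ} (ha : 0 < a) (t : ℝ) :
    HasDerivAt (fun y => √(a + 4 * sinh y ^ 2))
      (4 * sinh t * cosh t / √(a + 4 * sinh t ^ 2)) t := by
  have hpos : 0 < a + 4 * sinh t ^ 2 := by positivity
  have h := (((hasDerivAt_sinh t).fun_pow 2).const_mul 4).const_add a |>.sqrt hpos.ne'
  refine h.congr_deriv ?_
  field_simp
  ring

lemma sqrt_one_sub_mul_tanh_sq {ν k : ℝ} (hν : 0 < ν) (hk : k ^ 2 = (ν ^ 2 - 4) / ν ^ 2)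
    (t : ℝ) : √(1 - k ^ 2 * tanh t ^ 2) = √(ν ^ 2 + 4 * sinh t ^ 2) / (ν * cosh t) := by
  have h : 1 - k ^ 2 * tanh t ^ 2 = (ν ^ 2 + 4 * sinh t ^ 2) / (ν * cosh t) ^ 2 := by
    rw [hk, tanh_eq_sinh_div_cosh]
    field_simp
    rw [cosh_sq]
    ring
  rw [h, sqrt_div' _ (by positivity), sqrt_sq (by positivity)]

lemma hasDerivAt_elliptic_antiderivative {ν k : ℝ} (hν : 0 < ν)
    (hk : k ^ 2 = (ν ^ 2 - 4) / ν ^ 2) (t : ℝ) :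
    HasDerivAt (fun y => ν * (ellipticF (arcsin (tanh y)) k - ellipticE (arcsin (tanh y)) k)
        + tanh y * √(ν ^ 2 + 4 * sinh y ^ 2)) (√(ν ^ 2 + 4 * sinh t ^ 2)) t := by
  have hk1 : k ^ 2 < 1 := by
    rw [hk, div_lt_one (by positivity)]; linarith
  have h := ((hasDerivAt_ellipticF_sub_ellipticE_arcsin_tanh hk1 t).const_mul ν).add
    ((hasDerivAt_tanh t).mul (hasDerivAt_sqrt_add_four_mul_sinh_sq (pow_pos hν 2) t))
  refine h.congr_deriv ?_
  have hQ2 : √(ν ^ 2 + 4 * sinh t ^ 2) ^ 2 = ν ^ 2 + 4 * sinh t ^ 2 := sq_sqrt (by positivity)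
  rw [sqrt_one_sub_mul_tanh_sq hν hk, tanh_eq_sinh_div_cosh]
  field_simp
  linear_combination (-cosh t ^ 2) * hQ2

/-- For `ν > 2` and `k = √(ν² − 4)/ν`, the antiderivative of `√(ν² − 2 + 2 cosh 2s)`
is expressed via incomplete elliptic integrals. -/
theorem stmt_1 (ν : ℝ) (hν : 2 < ν) (k : ℝ) (hk : k = Real.sqrt (ν ^ 2 - 4) / ν) :
    ∀ x : ℝ,
      ∫ s in (0:ℝ)..x, Real.sqrt (ν ^ 2 - 2 + 2 * Real.cosh (2 * s)) =
        ν * (ellipticF (Real.arcsin (Real.tanh x)) k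
              - ellipticE (Real.arcsin (Real.tanh x)) k)
          + Real.tanh x * Real.sqrt (ν ^ 2 - 2 + 2 * Real.cosh (2 * x)) := by
  intro x
  have hν0 : 0 < ν := by linarith
  have hk2 : k ^ 2 = (ν ^ 2 - 4) / ν ^ 2 := by
    rw [hk, div_pow, sq_sqrt (by nlinarith)]
  simp_rw [sub_two_add_two_mul_cosh_two_mul]
  rw [intervalIntegral.integral_eq_sub_of_hasDerivAt
    (fun t _ => hasDerivAt_elliptic_antiderivative hν0 hk2 t)
    (Continuous.intervalIntegrable (by fun_prop) _ _)]
  simp [ellipticF, ellipticE]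
end

section
/- Let ν > 0. Then, as x → ∞, the function x ↦ √(ν² + e^{2x}) + νx − ν·log(ν + √(ν² + e^{2x})) − eˣ is O(e^{−x}). -/
/-!
Put `y = eˣ` and `s = √(ν² + y²)`. Since `ν x = ν log y`, the function equals
`(s - y) - ν log ((ν + s) / y)`. Both terms are `O(1/y)`: `0 ≤ s - y ≤ ν² / y`, and
`0 ≤ log ((ν + s) / y) ≤ (ν + s) / y - 1 = (ν + (s - y)) / y`.
-/

open Real Filter Asymptotics

namespace Real

lemma le_sqrt_sq_add_sq (a y : ℝ) : y ≤ √(a ^ 2 + y ^ 2) :=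
  le_sqrt_of_sq_le (le_add_of_nonneg_left (sq_nonneg a))

lemma sqrt_sq_add_sq_sub_le (a : ℝ) {y : ℝ} (hy : 0 < y) : √(a ^ 2 + y ^ 2) - y ≤ a ^ 2 / y := by
  rw [sub_le_iff_le_add, sqrt_le_left (by positivity)]
  have hmul : a ^ 2 / y * y = a ^ 2 := div_mul_cancel₀ _ hy.ne'
  nlinarith [sq_nonneg (a ^ 2 / y)]

lemma isBigO_sqrt_sq_add_sq_sub_self (a : ℝ) :
    (fun y => √(a ^ 2 + y ^ 2) - y) =O[atTop] (·⁻¹) := by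
  refine IsBigO.of_bound (a ^ 2) ?_
  filter_upwards [eventually_gt_atTop 0] with y hy
  rw [norm_of_nonneg (sub_nonneg.2 (le_sqrt_sq_add_sq a y)), norm_of_nonneg (inv_nonneg.2 hy.le),
    ← div_eq_mul_inv]
  exact sqrt_sq_add_sq_sub_le a hy

lemma log_add_sqrt_sq_add_sq_div_nonneg {a y : ℝ} (ha : 0 ≤ a) (hy : 0 < y) :
    0 ≤ log ((a + √(a ^ 2 + y ^ 2)) / y) := by
  refine log_nonneg ((one_le_div hy).2 ?_)
  linarith [le_sqrt_sq_add_sq a y]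

lemma log_add_sqrt_sq_add_sq_div_le {a y : ℝ} (ha : 0 ≤ a) (hy : 1 ≤ y) :
    log ((a + √(a ^ 2 + y ^ 2)) / y) ≤ (a + a ^ 2) / y := by
  have hy₀ : 0 < y := one_pos.trans_le hy
  calc log ((a + √(a ^ 2 + y ^ 2)) / y)
      ≤ (a + √(a ^ 2 + y ^ 2)) / y - 1 :=
        log_le_sub_one_of_pos (div_pos (by positivity) hy₀)
    _ = (a + (√(a ^ 2 + y ^ 2) - y)) / y := by field_simp; ring
    _ ≤ (a + a ^ 2 / y) / y := by gcongr; exact sqrt_sq_add_sq_sub_le a hy₀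
    _ ≤ (a + a ^ 2) / y := by gcongr; exact div_le_self (sq_nonneg a) hy

lemma isBigO_log_add_sqrt_sq_add_sq_div {a : ℝ} (ha : 0 ≤ a) :
    (fun y => log ((a + √(a ^ 2 + y ^ 2)) / y)) =O[atTop] (·⁻¹) := by
  refine IsBigO.of_bound (a + a ^ 2) ?_
  filter_upwards [eventually_ge_atTop 1] with y hy
  have hy₀ : 0 < y := one_pos.trans_le hy
  rw [norm_of_nonneg (log_add_sqrt_sq_add_sq_div_nonneg ha hy₀),
    norm_of_nonneg (inv_nonneg.2 hy₀.le), ← div_eq_mul_inv]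
  exact log_add_sqrt_sq_add_sq_div_le ha hy

end Real

/-- As `x → ∞`, `√(ν² + e^{2x}) + νx − ν log(ν + √(ν² + e^{2x})) − eˣ = O(e^{−x})`. -/
theorem stmt_5 (ν : ℝ) (hν : 0 < ν) :
    (fun x : ℝ =>
        Real.sqrt (ν ^ 2 + Real.exp (2 * x)) + ν * x
          - ν * Real.log (ν + Real.sqrt (ν ^ 2 + Real.exp (2 * x)))
          - Real.exp x)
      =O[atTop] (fun x => Real.exp (-x)) := by
  have hO := ((isBigO_sqrt_sq_add_sq_sub_self ν).sub
    ((isBigO_log_add_sqrt_sq_add_sq_div hν.le).const_mul_left ν)).comp_tendsto tendsto_exp_atTop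
  refine hO.congr (fun x => ?_) (fun x => ?_)
  · have hs : 0 < ν + √(ν ^ 2 + exp x ^ 2) := by positivity
    rw [Function.comp_apply, log_div hs.ne' (exp_pos x).ne', log_exp, ← exp_nat_mul]
    push_cast
    ring
  · simp [exp_neg]
end

section
/- The complete elliptic integral of the first kind satisfies K(k) − log(4/√(1 − k²)) → 0 as k → 1⁻. -/
/-!
Write the numerator of the integrand as `(1 - sin θ) + sin θ`. The `sin θ` part has the elementary
antiderivative `-log (k cos θ + √(1 - k² sin² θ)) / k`, so it equals `log ((1 + k) / k') / k` with
`k' = √(1 - k²)`, which differs from `log (4 / k')` by a quantity tending to `-log 2`. The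
`(1 - sin θ)` part is bounded by `1` and, by dominated convergence, tends to
`∫ θ in 0..π/2, cos θ / (1 + sin θ) = log 2`.
-/

open Real Filter Topology Set

/-- Complete elliptic integral of the first kind. -/
noncomputable def ellipticK (k : ℝ) : ℝ :=
  ∫ θ in (0:ℝ)..(Real.pi / 2), 1 / Real.sqrt (1 - k ^ 2 * Real.sin θ ^ 2)

lemma sin_nonneg_of_mem_uIcc_zero_pi_div_two {θ : ℝ} (hθ : θ ∈ uIcc 0 (π / 2)) : 0 ≤ sin θ := by
  rw [uIcc_of_le (by positivity)] at hθ
  exact sin_nonneg_of_nonneg_of_le_pi hθ.1 (by linarith [hθ.2, pi_pos])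

lemma one_sub_sq_mul_sin_sq_pos {k : ℝ} (hk : k ^ 2 < 1) (θ : ℝ) :
    0 < 1 - k ^ 2 * sin θ ^ 2 := by
  nlinarith [sin_sq_le_one θ, sq_nonneg k]

lemma sqrt_one_sub_sq_mul_sin_sq_ne_zero {k : ℝ} (hk : k ^ 2 < 1) (θ : ℝ) :
    √(1 - k ^ 2 * sin θ ^ 2) ≠ 0 :=
  (sqrt_pos.2 (one_sub_sq_mul_sin_sq_pos hk θ)).ne'

lemma intervalIntegrable_div_sqrt_one_sub_sq_mul_sin_sq {k : ℝ} (hk : k ^ 2 < 1) {f : ℝ → ℝ}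
    (hf : Continuous f) (a b : ℝ) :
    IntervalIntegrable (fun θ ↦ f θ / √(1 - k ^ 2 * sin θ ^ 2)) MeasureTheory.volume a b :=
  (hf.div (by fun_prop) (sqrt_one_sub_sq_mul_sin_sq_ne_zero hk)).intervalIntegrable a b

lemma mul_cos_add_sqrt_one_sub_sq_mul_sin_sq_pos {k : ℝ} (hk : k ^ 2 < 1) (θ : ℝ) :
    0 < k * cos θ + √(1 - k ^ 2 * sin θ ^ 2) := by
  have hlt : |k * cos θ| < √(1 - k ^ 2 * sin θ ^ 2) := by
    rw [← sqrt_sq_eq_abs]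
    apply sqrt_lt_sqrt (sq_nonneg _)
    nlinarith [sin_sq_add_cos_sq θ, sq_nonneg (cos θ)]
  linarith [neg_abs_le (k * cos θ)]

lemma hasDerivAt_log_mul_cos_add_sqrt {k : ℝ} (hk : k ^ 2 < 1) (θ : ℝ) :
    HasDerivAt (fun θ ↦ log (k * cos θ + √(1 - k ^ 2 * sin θ ^ 2)))
      (-k * sin θ / √(1 - k ^ 2 * sin θ ^ 2)) θ := by
  have hΔ := one_sub_sq_mul_sin_sq_pos hk θ
  have harg := (mul_cos_add_sqrt_one_sub_sq_mul_sin_sq_pos hk θ).ne'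
  have hΔ' : HasDerivAt (fun θ ↦ 1 - k ^ 2 * sin θ ^ 2) (-(k ^ 2 * (2 * sin θ * cos θ))) θ := by
    simpa using ((hasDerivAt_sin θ).pow 2).const_mul (k ^ 2) |>.const_sub 1
  refine ((((hasDerivAt_cos θ).const_mul k).add (hΔ'.sqrt hΔ.ne')).log harg).congr_deriv ?_
  simp only [Pi.add_apply]
  field_simp
  ring

lemma integral_sin_div_sqrt_one_sub_sq_mul_sin_sq {k : ℝ} (hk0 : k ≠ 0) (hk : k ^ 2 < 1) :
    ∫ θ in (0)..(π / 2), sin θ / √(1 - k ^ 2 * sin θ ^ 2) = log ((1 + k) / √(1 - k ^ 2)) / k := by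
  have hderiv (θ : ℝ) : HasDerivAt (fun θ ↦ -log (k * cos θ + √(1 - k ^ 2 * sin θ ^ 2)) / k)
      (sin θ / √(1 - k ^ 2 * sin θ ^ 2)) θ := by
    refine ((hasDerivAt_log_mul_cos_add_sqrt hk θ).neg.div_const k).congr_deriv ?_
    field_simp
  rw [intervalIntegral.integral_eq_sub_of_hasDerivAt (fun θ _ ↦ hderiv θ)
    (intervalIntegrable_div_sqrt_one_sub_sq_mul_sin_sq hk continuous_sin _ _)]
  have h1k : 0 < 1 + k := by nlinarith
  have hs : 0 < √(1 - k ^ 2) := sqrt_pos.2 (by linarith)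
  simp only [sin_pi_div_two, cos_pi_div_two, sin_zero, cos_zero, log_div h1k.ne' hs.ne']
  norm_num
  rw [add_comm k 1]
  ring

lemma ellipticK_eq_integral_add_log {k : ℝ} (hk0 : k ≠ 0) (hk : k ^ 2 < 1) :
    ellipticK k = (∫ θ in (0)..(π / 2), (1 - sin θ) / √(1 - k ^ 2 * sin θ ^ 2))
      + log ((1 + k) / √(1 - k ^ 2)) / k := by
  rw [← integral_sin_div_sqrt_one_sub_sq_mul_sin_sq hk0 hk, ← intervalIntegral.integral_add
    (intervalIntegrable_div_sqrt_one_sub_sq_mul_sin_sq hk (by fun_prop) _ _)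
    (intervalIntegrable_div_sqrt_one_sub_sq_mul_sin_sq hk continuous_sin _ _), ellipticK]
  simp only [← add_div, sub_add_cancel]

lemma one_sub_sin_div_sqrt_one_sub_sin_sq (θ : ℝ) :
    (1 - sin θ) / √(1 - sin θ ^ 2) = |cos θ| / (1 + sin θ) := by
  rw [← abs_cos_eq_sqrt_one_sub_sin_sq]
  rcases eq_or_ne (cos θ) 0 with hc | hc
  · simp [hc]
  have hs : 1 + sin θ ≠ 0 := fun h ↦ hc (by nlinarith [sin_sq_add_cos_sq θ])
  rw [div_eq_div_iff (abs_ne_zero.2 hc) hs]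
  nlinarith [sq_abs (cos θ), sin_sq_add_cos_sq θ]

lemma integral_one_sub_sin_div_sqrt_one_sub_sin_sq :
    ∫ θ in (0)..(π / 2), (1 - sin θ) / √(1 - sin θ ^ 2) = log 2 := by
  have hsin_add {θ} (hθ : θ ∈ uIcc 0 (π / 2)) : 0 < 1 + sin θ := by
    linarith [sin_nonneg_of_mem_uIcc_zero_pi_div_two hθ]
  have hderiv {θ} (hθ : θ ∈ uIcc 0 (π / 2)) :
      HasDerivAt (fun θ ↦ log (1 + sin θ)) (cos θ / (1 + sin θ)) θ :=
    ((hasDerivAt_sin θ).const_add 1).log (hsin_add hθ).ne'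
  have hint : IntervalIntegrable (fun θ ↦ cos θ / (1 + sin θ)) MeasureTheory.volume 0 (π / 2) :=
    (continuous_cos.continuousOn.div (by fun_prop) fun θ hθ ↦ (hsin_add hθ).ne').intervalIntegrable
  calc ∫ θ in (0)..(π / 2), (1 - sin θ) / √(1 - sin θ ^ 2)
      = ∫ θ in (0)..(π / 2), cos θ / (1 + sin θ) := by
        refine intervalIntegral.integral_congr fun θ hθ ↦ ?_
        rw [uIcc_of_le (by positivity)] at hθ
        rw [one_sub_sin_div_sqrt_one_sub_sin_sq,
          abs_of_nonneg (cos_nonneg_of_mem_Icc ⟨by linarith [hθ.1, pi_pos], hθ.2⟩)]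
    _ = log 2 := by
        rw [intervalIntegral.integral_eq_sub_of_hasDerivAt (fun θ hθ ↦ hderiv hθ) hint]
        norm_num

lemma one_sub_le_sqrt_one_sub_sq_mul_sq {k s : ℝ} (hk : k ^ 2 ≤ 1) (hs₀ : 0 ≤ s) (hs₁ : s ≤ 1) :
    1 - s ≤ √(1 - k ^ 2 * s ^ 2) :=
  le_sqrt_of_sq_le (by nlinarith [mul_le_mul_of_nonneg_right hk (sq_nonneg s)])

lemma tendsto_one_sub_div_sqrt_one_sub_sq_mul_sq {s : ℝ} (hs₀ : -1 < s) (hs₁ : s ≤ 1) :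
    Tendsto (fun k ↦ (1 - s) / √(1 - k ^ 2 * s ^ 2)) (𝓝 1) (𝓝 ((1 - s) / √(1 - s ^ 2))) := by
  rcases hs₁.eq_or_lt with rfl | hs₁
  · simp
  have hcont : ContinuousAt (fun k : ℝ ↦ (1 - s) / √(1 - k ^ 2 * s ^ 2)) 1 :=
    continuousAt_const.div (by fun_prop) (sqrt_pos.2 (by nlinarith)).ne'
  simpa only [one_pow, one_mul] using hcont.tendsto

lemma tendsto_integral_one_sub_sin_div_sqrt :
    Tendsto (fun k ↦ ∫ θ in (0)..(π / 2), (1 - sin θ) / √(1 - k ^ 2 * sin θ ^ 2)) (𝓝[<] 1)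
      (𝓝 (log 2)) := by
  have hsin {θ} (hθ : θ ∈ uIoc 0 (π / 2)) : 0 ≤ sin θ :=
    sin_nonneg_of_mem_uIcc_zero_pi_div_two (uIoc_subset_uIcc hθ)
  rw [← integral_one_sub_sin_div_sqrt_one_sub_sin_sq]
  refine intervalIntegral.tendsto_integral_filter_of_dominated_convergence (fun _ ↦ 1)
    (.of_forall fun k ↦ Measurable.aestronglyMeasurable (by fun_prop)) ?bound
    intervalIntegrable_const ?limit
  case bound =>
    filter_upwards [Ioo_mem_nhdsLT zero_lt_one] with k ⟨hk₀, hk₁⟩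
    refine .of_forall fun θ hθ ↦ ?_
    rw [norm_of_nonneg (div_nonneg (by linarith [sin_le_one θ]) (sqrt_nonneg _))]
    exact div_le_one_of_le₀ (one_sub_le_sqrt_one_sub_sq_mul_sq (by nlinarith) (hsin hθ)
      (sin_le_one θ)) (sqrt_nonneg _)
  case limit =>
    refine .of_forall fun θ hθ ↦ ?_
    exact (tendsto_one_sub_div_sqrt_one_sub_sq_mul_sq (by linarith [hsin hθ])
      (sin_le_one θ)).mono_left nhdsWithin_le_nhds

lemma tendsto_log_div_sub_log :
    Tendsto (fun k ↦ log ((1 + k) / √(1 - k ^ 2)) / k - log (4 / √(1 - k ^ 2))) (𝓝[<] 1)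
      (𝓝 (-log 2)) := by
  -- `(1 - 1/k) log √(1 - k²) = -(1 - k²) log (1 - k²) / (2k(1 + k))`, and `x log x` is
  -- continuous at `0`
  have hcont : ContinuousAt
      (fun k ↦ log (1 + k) / k - log 4 - (1 - k ^ 2) * log (1 - k ^ 2) / (2 * k * (1 + k))) 1 := by
    have hlog : ContinuousAt (fun k : ℝ ↦ log (1 + k)) 1 :=
      (continuousAt_log (by norm_num)).comp (by fun_prop)
    have hmul_log : ContinuousAt (fun k : ℝ ↦ (1 - k ^ 2) * log (1 - k ^ 2)) 1 :=
      continuous_mul_log.continuousAt.comp (f := fun k : ℝ ↦ 1 - k ^ 2) (by fun_prop)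
    exact ((hlog.div continuousAt_id one_ne_zero).sub continuousAt_const).sub
      (hmul_log.div (by fun_prop) (by norm_num))
  have hval : log (1 + 1) / 1 - log 4 - (1 - 1 ^ 2) * log (1 - 1 ^ 2) / (2 * 1 * (1 + 1))
      = -log 2 := by
    rw [show (4 : ℝ) = 2 ^ 2 by norm_num, log_pow]
    norm_num
    ring
  refine (hval ▸ hcont.tendsto.mono_left nhdsWithin_le_nhds).congr' ?_
  filter_upwards [Ioo_mem_nhdsLT zero_lt_one] with k ⟨hk₀, hk₁⟩
  have h1k : 0 < 1 + k := by linarith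
  have hk2 : 0 < 1 - k ^ 2 := by nlinarith
  have hs : 0 < √(1 - k ^ 2) := sqrt_pos.2 hk2
  rw [log_div h1k.ne' hs.ne', log_div four_ne_zero hs.ne', log_sqrt hk2.le]
  field_simp
  ring

/-- `K(k) − log(4/√(1 − k²)) → 0` as `k → 1⁻`. -/
theorem stmt_9 :
    Tendsto (fun k : ℝ => ellipticK k - Real.log (4 / Real.sqrt (1 - k ^ 2)))
      (nhdsWithin 1 (Set.Iio 1)) (nhds 0) := by
  have h := tendsto_integral_one_sub_sin_div_sqrt.add tendsto_log_div_sub_log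
  rw [add_neg_cancel] at h
  refine h.congr' ?_
  filter_upwards [Ioo_mem_nhdsLT zero_lt_one] with k ⟨hk₀, hk₁⟩
  rw [ellipticK_eq_integral_add_log hk₀.ne' (by nlinarith)]
  ring
end

section
/- Let C > 0 and let g, h : ℝ → ℂ be continuous functions satisfying |g(x)| ≤ C·e^{−eˣ}·e^{−x/2} and |h(x)| ≤ C·e^{eˣ}·e^{−x/2} for all x ∈ ℝ. Define f₀ = g and, recursively, f_{n+1}(x) = ∫ₓ^∞ (h(x)g(y) − g(x)h(y))·e^{−2y}·f_n(y) dy. Then for every n ≥ 0, the integral defining f_{n+1} converges absolutely for every x ∈ ℝ, and |f_n(x)| ≤ (2ⁿ·C^{2n+1}/(3ⁿ·n!))·e^{−eˣ}·e^{−(6n+1)x/2} for all x ∈ ℝ. -/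
/-! For `x ≤ y` the kernel satisfies `|h(x)g(y) − g(x)h(y)| ≤ 2C² e^{−eˣ} e^{eʸ} e^{−(x+y)/2}`, and the
growth `e^{eʸ}` is cancelled exactly by the factor `e^{−eʸ}` of the inductive bound on `f_n(y)`.
What remains under the integral is a multiple of `e^{−(3n+3)y}`, whose tail integral from `x` is
`e^{−(3n+3)x}/(3n+3)`: this gives the factor `2C²/(3(n+1))` and shifts the exponent by `3x`.
Measurability is carried through the induction as continuity, since
`f_{n+1}(x) = h(x) ∫ₓ^∞ g e^{−2y} f_n − g(x) ∫ₓ^∞ h e^{−2y} f_n` combines continuous functions with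
tail integrals of integrable functions. -/

open Real MeasureTheory Set

theorem continuous_primitive_Ioi {E : Type*} [NormedAddCommGroup E] [NormedSpace ℝ E]
    {μ : Measure ℝ} [NullSingletonClass μ] {f : ℝ → E}
    (hf : ∀ a, IntegrableOn f (Ioi a) μ) : Continuous fun b ↦ ∫ x in Ioi b, f x ∂μ :=
  continuous_iff_continuousAt.2 fun b ↦
    ((hf (b - 1)).continuousOn_Ici_primitive_Ioi).continuousAt (Ici_mem_nhds (by linarith))

theorem integrableOn_Ioi_of_norm_le_exp {E : Type*} [NormedAddCommGroup E] {u : ℝ → E}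
    (hu : AEStronglyMeasurable u) {K b : ℝ} (hb : 0 < b)
    (hle : ∀ y, ‖u y‖ ≤ K * exp (-b * y)) (a : ℝ) : IntegrableOn u (Ioi a) :=
  ((exp_neg_integrableOn_Ioi a hb).const_mul K).mono' hu.restrict (ae_of_all _ hle)

theorem integral_exp_neg_mul_Ioi {b : ℝ} (hb : 0 < b) (a : ℝ) :
    ∫ y in Ioi a, exp (-b * y) = exp (-b * a) / b := by
  rw [integral_exp_mul_Ioi (neg_neg_iff_pos.2 hb), neg_div_neg_eq]

noncomputable def volterraIntegrand (g h u : ℝ → ℂ) (x y : ℝ) : ℂ :=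
  (h x * g y - g x * h y) * Real.exp (-2 * y) * u y

noncomputable def volterraBound (C : ℝ) (n : ℕ) : ℝ :=
  2 ^ n * C ^ (2 * n + 1) / (3 ^ n * n.factorial)

theorem volterraBound_zero (C : ℝ) : volterraBound C 0 = C := by
  simp [volterraBound]

theorem volterraBound_succ (C : ℝ) (n : ℕ) :
    volterraBound C (n + 1) = 2 * C ^ 2 * volterraBound C n / (3 * n + 3) := by
  have hfact : (n.factorial : ℝ) ≠ 0 := by positivity
  simp only [volterraBound, Nat.factorial_succ]
  push_cast
  field_simp
  ring

section Estimates

variable {C : ℝ} {g h u : ℝ → ℂ} {B s : ℝ}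

theorem norm_mul_exp_mul_le (hC : 0 ≤ C) {k : ℝ → ℂ}
    (hk : ∀ y, ‖k y‖ ≤ C * exp (exp y) * exp (-y / 2))
    (hu : ∀ y, ‖u y‖ ≤ B * exp (-exp y) * exp (-(6 * s + 1) * y / 2)) (y : ℝ) :
    ‖k y * Real.exp (-2 * y) * u y‖ ≤ C * B * exp (-(3 * s + 3) * y) := by
  have hexp : exp (exp y) * exp (-y / 2) * exp (-2 * y) * exp (-exp y)
      * exp (-(6 * s + 1) * y / 2) = exp (-(3 * s + 3) * y) := by
    simp only [← exp_add]; ring_nf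
  calc ‖k y * Real.exp (-2 * y) * u y‖ = ‖k y‖ * exp (-2 * y) * ‖u y‖ := by
        simp only [norm_mul, Complex.norm_real, norm_eq_abs, abs_exp]
    _ ≤ (C * exp (exp y) * exp (-y / 2)) * exp (-2 * y)
          * (B * exp (-exp y) * exp (-(6 * s + 1) * y / 2)) := by
        gcongr
        exacts [hk y, hu y]
    _ = C * B * exp (-(3 * s + 3) * y) := by rw [← hexp]; ring

theorem norm_cross_le (hC : 0 ≤ C) (hg : ∀ x, ‖g x‖ ≤ C * exp (-exp x) * exp (-x / 2))
    (hh : ∀ x, ‖h x‖ ≤ C * exp (exp x) * exp (-x / 2)) {x y : ℝ} (hxy : x ≤ y) :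
    ‖h x * g y - g x * h y‖
      ≤ 2 * C ^ 2 * exp (-exp x) * exp (exp y) * exp (-x / 2) * exp (-y / 2) := by
  have hswap : exp (exp x) * exp (-exp y) ≤ exp (-exp x) * exp (exp y) := by
    rw [← exp_add, ← exp_add]
    exact exp_le_exp.2 (by linarith [exp_le_exp.2 hxy])
  calc ‖h x * g y - g x * h y‖ ≤ ‖h x‖ * ‖g y‖ + ‖g x‖ * ‖h y‖ := by
        simpa only [norm_mul] using norm_sub_le (h x * g y) (g x * h y)
    _ ≤ (C * exp (exp x) * exp (-x / 2)) * (C * exp (-exp y) * exp (-y / 2))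
          + (C * exp (-exp x) * exp (-x / 2)) * (C * exp (exp y) * exp (-y / 2)) := by
        gcongr
        exacts [hh x, hg y, hg x, hh y]
    _ = (exp (exp x) * exp (-exp y) + exp (-exp x) * exp (exp y))
          * (C ^ 2 * exp (-x / 2) * exp (-y / 2)) := by ring
    _ ≤ (exp (-exp x) * exp (exp y) + exp (-exp x) * exp (exp y))
          * (C ^ 2 * exp (-x / 2) * exp (-y / 2)) := by gcongr
    _ = 2 * C ^ 2 * exp (-exp x) * exp (exp y) * exp (-x / 2) * exp (-y / 2) := by ring

theorem integrableOn_mul_exp_mul (hC : 0 ≤ C) {k : ℝ → ℂ} (hk_cont : Continuous k)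
    (hk : ∀ y, ‖k y‖ ≤ C * exp (exp y) * exp (-y / 2)) (hu_cont : Continuous u)
    (hu : ∀ y, ‖u y‖ ≤ B * exp (-exp y) * exp (-(6 * s + 1) * y / 2)) (hs : -1 < s) (a : ℝ) :
    IntegrableOn (fun y ↦ k y * Real.exp (-2 * y) * u y) (Ioi a) :=
  integrableOn_Ioi_of_norm_le_exp (by fun_prop : Continuous _).aestronglyMeasurable
    (by linarith : 0 < 3 * s + 3) (norm_mul_exp_mul_le hC hk hu) a

theorem volterraIntegrand_eq (x : ℝ) :
    volterraIntegrand g h u x = fun y ↦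
      h x * (g y * Real.exp (-2 * y) * u y) - g x * (h y * Real.exp (-2 * y) * u y) := by
  funext y
  simp only [volterraIntegrand]
  ring

theorem integrableOn_volterraIntegrand
    (hgi : ∀ a, IntegrableOn (fun y ↦ g y * Real.exp (-2 * y) * u y) (Ioi a))
    (hhi : ∀ a, IntegrableOn (fun y ↦ h y * Real.exp (-2 * y) * u y) (Ioi a)) (x : ℝ) :
    IntegrableOn (volterraIntegrand g h u x) (Ioi x) := by
  rw [volterraIntegrand_eq]
  exact ((hgi x).const_mul _).sub ((hhi x).const_mul _)

theorem integral_volterraIntegrand_eq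
    (hgi : ∀ a, IntegrableOn (fun y ↦ g y * Real.exp (-2 * y) * u y) (Ioi a))
    (hhi : ∀ a, IntegrableOn (fun y ↦ h y * Real.exp (-2 * y) * u y) (Ioi a)) (x : ℝ) :
    ∫ y in Ioi x, volterraIntegrand g h u x y
      = h x * (∫ y in Ioi x, g y * Real.exp (-2 * y) * u y)
        - g x * ∫ y in Ioi x, h y * Real.exp (-2 * y) * u y := by
  rw [volterraIntegrand_eq, integral_sub ((hgi x).const_mul _) ((hhi x).const_mul _),
    integral_const_mul, integral_const_mul]

theorem continuous_integral_volterraIntegrand (hg_cont : Continuous g) (hh_cont : Continuous h)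
    (hgi : ∀ a, IntegrableOn (fun y ↦ g y * Real.exp (-2 * y) * u y) (Ioi a))
    (hhi : ∀ a, IntegrableOn (fun y ↦ h y * Real.exp (-2 * y) * u y) (Ioi a)) :
    Continuous fun x ↦ ∫ y in Ioi x, volterraIntegrand g h u x y := by
  simp only [integral_volterraIntegrand_eq hgi hhi]
  exact (hh_cont.mul (continuous_primitive_Ioi hgi)).sub
    (hg_cont.mul (continuous_primitive_Ioi hhi))

theorem norm_volterraIntegrand_le (hC : 0 ≤ C)
    (hg : ∀ x, ‖g x‖ ≤ C * exp (-exp x) * exp (-x / 2))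
    (hh : ∀ x, ‖h x‖ ≤ C * exp (exp x) * exp (-x / 2))
    (hu : ∀ y, ‖u y‖ ≤ B * exp (-exp y) * exp (-(6 * s + 1) * y / 2)) {x y : ℝ} (hxy : x ≤ y) :
    ‖volterraIntegrand g h u x y‖
      ≤ 2 * C ^ 2 * B * exp (-exp x) * exp (-x / 2) * exp (-(3 * s + 3) * y) := by
  have hexp : exp (exp y) * exp (-y / 2) * exp (-2 * y) * exp (-exp y)
      * exp (-(6 * s + 1) * y / 2) = exp (-(3 * s + 3) * y) := by
    simp only [← exp_add]; ring_nf
  calc ‖volterraIntegrand g h u x y‖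
        = ‖h x * g y - g x * h y‖ * exp (-2 * y) * ‖u y‖ := by
        simp only [volterraIntegrand, norm_mul, Complex.norm_real, norm_eq_abs, abs_exp]
    _ ≤ (2 * C ^ 2 * exp (-exp x) * exp (exp y) * exp (-x / 2) * exp (-y / 2)) * exp (-2 * y)
          * (B * exp (-exp y) * exp (-(6 * s + 1) * y / 2)) := by
        gcongr
        exacts [norm_cross_le hC hg hh hxy, hu y]
    _ = 2 * C ^ 2 * B * exp (-exp x) * exp (-x / 2) * exp (-(3 * s + 3) * y) := by
        rw [← hexp]; ring

theorem norm_integral_volterraIntegrand_le (hC : 0 ≤ C)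
    (hg : ∀ x, ‖g x‖ ≤ C * exp (-exp x) * exp (-x / 2))
    (hh : ∀ x, ‖h x‖ ≤ C * exp (exp x) * exp (-x / 2))
    (hu : ∀ y, ‖u y‖ ≤ B * exp (-exp y) * exp (-(6 * s + 1) * y / 2)) (hs : -1 < s) (x : ℝ) :
    ‖∫ y in Ioi x, volterraIntegrand g h u x y‖
      ≤ 2 * C ^ 2 * B / (3 * s + 3) * exp (-exp x) * exp (-(6 * (s + 1) + 1) * x / 2) := by
  have hs' : 0 < 3 * s + 3 := by linarith
  have hexp : exp (-x / 2) * exp (-(3 * s + 3) * x) = exp (-(6 * (s + 1) + 1) * x / 2) := by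
    rw [← exp_add]; ring_nf
  calc ‖∫ y in Ioi x, volterraIntegrand g h u x y‖
        ≤ ∫ y in Ioi x, 2 * C ^ 2 * B * exp (-exp x) * exp (-x / 2) * exp (-(3 * s + 3) * y) :=
        norm_integral_le_of_norm_le ((exp_neg_integrableOn_Ioi x hs').const_mul _)
          ((ae_restrict_iff' measurableSet_Ioi).2 (ae_of_all _ fun y hy ↦
            norm_volterraIntegrand_le hC hg hh hu (le_of_lt hy)))
    _ = 2 * C ^ 2 * B * exp (-exp x) * exp (-x / 2) * (exp (-(3 * s + 3) * x) / (3 * s + 3)) := by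
        rw [integral_const_mul, integral_exp_neg_mul_Ioi hs']
    _ = 2 * C ^ 2 * B / (3 * s + 3) * exp (-exp x) * exp (-(6 * (s + 1) + 1) * x / 2) := by
        rw [← hexp]; ring

end Estimates

/-- Bounds on the successive approximations for the Volterra integral equation:
if `|g(x)| ≤ C e^{−eˣ} e^{−x/2}` and `|h(x)| ≤ C e^{eˣ} e^{−x/2}`, then the
iterates `f_{n+1}(x) = ∫ₓ^∞ (h(x)g(y) − g(x)h(y)) e^{−2y} f_n(y) dy` are given by
absolutely convergent integrals and satisfy
`|f_n(x)| ≤ (2ⁿ C^{2n+1} / (3ⁿ n!)) e^{−eˣ} e^{−(6n+1)x/2}`. -/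
theorem stmt_12 (C : ℝ) (hC : 0 < C) (g h : ℝ → ℂ)
    (hg_cont : Continuous g) (hh_cont : Continuous h)
    (hg : ∀ x : ℝ, ‖g x‖ ≤ C * Real.exp (-Real.exp x) * Real.exp (-x / 2))
    (hh : ∀ x : ℝ, ‖h x‖ ≤ C * Real.exp (Real.exp x) * Real.exp (-x / 2))
    (f : ℕ → ℝ → ℂ) (hf0 : f 0 = g)
    (hf : ∀ n : ℕ, ∀ x : ℝ,
      f (n + 1) x =
        ∫ y in Set.Ioi x, (h x * g y - g x * h y) * Real.exp (-2 * y) * f n y) :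
    ∀ n : ℕ,
      (∀ x : ℝ,
        IntegrableOn (fun y => (h x * g y - g x * h y) * Real.exp (-2 * y) * f n y)
          (Set.Ioi x)) ∧
      (∀ x : ℝ,
        ‖f n x‖ ≤ 2 ^ n * C ^ (2 * n + 1) / (3 ^ n * n.factorial)
          * Real.exp (-Real.exp x) * Real.exp (-(6 * n + 1) * x / 2)) := by
  have hn : ∀ n : ℕ, (-1 : ℝ) < n := fun n ↦ neg_one_lt_zero.trans_le n.cast_nonneg
  have hg' : ∀ x, ‖g x‖ ≤ C * exp (exp x) * exp (-x / 2) := fun x ↦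
    (hg x).trans (by gcongr; exact neg_le_self (exp_pos x).le)
  have hpieces : ∀ n, Continuous (f n) →
      (∀ y, ‖f n y‖ ≤ volterraBound C n * exp (-exp y) * exp (-(6 * n + 1) * y / 2)) →
        (∀ a, IntegrableOn (fun y ↦ g y * Real.exp (-2 * y) * f n y) (Ioi a)) ∧
        ∀ a, IntegrableOn (fun y ↦ h y * Real.exp (-2 * y) * f n y) (Ioi a) := fun n hc hb ↦
    ⟨integrableOn_mul_exp_mul hC.le hg_cont hg' hc hb (hn n),
      integrableOn_mul_exp_mul hC.le hh_cont hh hc hb (hn n)⟩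
  have hiter : ∀ n, Continuous (f n) ∧
      ∀ x, ‖f n x‖ ≤ volterraBound C n * exp (-exp x) * exp (-(6 * n + 1) * x / 2) := by
    intro n
    induction n with
    | zero => exact hf0 ▸ ⟨hg_cont, by simpa [volterraBound_zero] using hg⟩
    | succ n ih =>
      obtain ⟨hgi, hhi⟩ := hpieces n ih.1 ih.2
      rw [show f (n + 1) = _ from funext (hf n)]
      refine ⟨continuous_integral_volterraIntegrand hg_cont hh_cont hgi hhi, fun x ↦ ?_⟩
      refine (norm_integral_volterraIntegrand_le hC.le hg hh ih.2 (hn n) x).trans_eq ?_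
      rw [volterraBound_succ]
      push_cast
      ring
  intro n
  obtain ⟨hgi, hhi⟩ := hpieces n (hiter n).1 (hiter n).2
  exact ⟨integrableOn_volterraIntegrand hgi hhi, (hiter n).2⟩
end

section
/- Let C > 0 and let g, h : ℝ → ℂ be continuous functions satisfying |g(x)| ≤ C·e^{−eˣ}·e^{−x/2} and |h(x)| ≤ C·e^{eˣ}·e^{−x/2} for all x ∈ ℝ. Define f₀ = g and f_{n+1}(x) = ∫ₓ^∞ (h(x)g(y) − g(x)h(y))·e^{−2y}·f_n(y) dy. Then for every x ∈ ℝ the series S(x) = ∑_{n=0}^∞ f_n(x) converges absolutely, and for every x ≥ 0 one has |S(x) − g(x)| ≤ C·(e^{2C²/3} − 1)·e^{−eˣ}·e^{−7x/2}. -/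
/-!
For `x < y` the kernel satisfies `‖h x g y − g x h y‖ ≤ 2C² e^{eʸ−eˣ} e^{−(x+y)/2}`, and the growth
`e^{eʸ}` cancels against the decay `e^{−eʸ}` of `fₙ y`, so each iteration integrates a pure exponential
`e^{−3(n+1)y}` over `(x, ∞)`. Induction gives `‖fₙ x‖ ≤ C (2C²/3)ⁿ / n! · e^{−eˣ − (6n+1)x/2}`,
the terms of an exponential series; for `x ≥ 0` the terms with `n ≥ 1` are bounded by
`C (2C²/3)ⁿ / n! · e^{−eˣ − 7x/2}`, which sum to the stated error.
-/

open Real MeasureTheory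

lemma Real.tsum_pow_succ_div_factorial (r : ℝ) :
    ∑' n : ℕ, r ^ (n + 1) / (n + 1).factorial = exp r - 1 := by
  rw [exp_eq_exp_ℝ, NormedSpace.exp_eq_tsum_div]
  beta_reduce
  rw [(Real.summable_pow_div_factorial r).tsum_eq_zero_add]
  simp

lemma norm_tsum_sub_zero_le_of_le_pow_div_factorial {E : Type*} [NormedAddCommGroup E]
    [CompleteSpace E] {u : ℕ → E} {A r : ℝ} (hu : Summable fun n => ‖u n‖)
    (hle : ∀ n, ‖u (n + 1)‖ ≤ A * (r ^ (n + 1) / (n + 1).factorial)) :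
    ‖∑' n, u n - u 0‖ ≤ A * (exp r - 1) := by
  have htail : Summable fun n => ‖u (n + 1)‖ := hu.comp_injective (add_left_injective 1)
  rw [hu.of_norm.tsum_eq_zero_add, add_sub_cancel_left, ← tsum_pow_succ_div_factorial,
    ← tsum_mul_left]
  exact (norm_tsum_le_tsum_norm htail).trans <| htail.tsum_le_tsum hle <|
    ((Real.summable_pow_div_factorial r).comp_injective (add_left_injective 1)).mul_left A

lemma norm_setIntegral_Ioi_le_of_le_exp {E : Type*} [NormedAddCommGroup E] [NormedSpace ℝ E]
    {F : ℝ → E} {x b D : ℝ} (hb : 0 < b) (hF : ∀ y, x < y → ‖F y‖ ≤ D * exp (-b * y)) :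
    ‖∫ y in Set.Ioi x, F y‖ ≤ D * (exp (-b * x) / b) := by
  have hint : ∫ y in Set.Ioi x, exp (-b * y) = exp (-b * x) / b := by
    rw [integral_exp_mul_Ioi (neg_neg_of_pos hb), neg_div_neg_eq]
  rw [← hint, ← integral_const_mul]
  refine norm_integral_le_of_norm_le ((exp_neg_integrableOn_Ioi x hb).const_mul D) ?_
  filter_upwards [ae_restrict_mem measurableSet_Ioi] with y hy using hF y hy

section SuccessiveApproximations

variable {C : ℝ} {g h : ℝ → ℂ}
  (hg : ∀ x : ℝ, ‖g x‖ ≤ C * exp (-exp x) * exp (-x / 2))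
  (hh : ∀ x : ℝ, ‖h x‖ ≤ C * exp (exp x) * exp (-x / 2))
include hg hh

lemma norm_mul_sub_mul_le {x y : ℝ} (hxy : x ≤ y) :
    ‖h x * g y - g x * h y‖ ≤ 2 * C ^ 2 * exp (exp y - exp x - (x + y) / 2) := by
  have hexp : exp x ≤ exp y := exp_le_exp.mpr hxy
  have hhg : ‖h x‖ * ‖g y‖ ≤ C ^ 2 * exp (exp y - exp x - (x + y) / 2) :=
    calc ‖h x‖ * ‖g y‖
        ≤ (C * exp (exp x) * exp (-x / 2)) * (C * exp (-exp y) * exp (-y / 2)) :=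
          mul_le_mul (hh x) (hg y) (norm_nonneg _) ((norm_nonneg _).trans (hh x))
      _ = C ^ 2 * exp (exp x - exp y - (x + y) / 2) := by
          rw [show exp x - exp y - (x + y) / 2 = exp x + -exp y + (-x / 2 + -y / 2) by ring,
            exp_add, exp_add, exp_add]
          ring
      _ ≤ C ^ 2 * exp (exp y - exp x - (x + y) / 2) := by gcongr
  have hgh : ‖g x‖ * ‖h y‖ ≤ C ^ 2 * exp (exp y - exp x - (x + y) / 2) :=
    calc ‖g x‖ * ‖h y‖
        ≤ (C * exp (-exp x) * exp (-x / 2)) * (C * exp (exp y) * exp (-y / 2)) :=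
          mul_le_mul (hg x) (hh y) (norm_nonneg _) ((norm_nonneg _).trans (hg x))
      _ = C ^ 2 * exp (exp y - exp x - (x + y) / 2) := by
          rw [show exp y - exp x - (x + y) / 2 = -exp x + exp y + (-x / 2 + -y / 2) by ring,
            exp_add, exp_add, exp_add]
          ring
  calc ‖h x * g y - g x * h y‖ ≤ ‖h x‖ * ‖g y‖ + ‖g x‖ * ‖h y‖ := by
        simpa only [norm_mul] using norm_sub_le (h x * g y) (g x * h y)
    _ ≤ 2 * C ^ 2 * exp (exp y - exp x - (x + y) / 2) := by linarith

lemma norm_successiveApprox_le {f : ℕ → ℝ → ℂ} (hf0 : f 0 = g)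
    (hf : ∀ n : ℕ, ∀ x : ℝ,
      f (n + 1) x = ∫ y in Set.Ioi x, (h x * g y - g x * h y) * exp (-2 * y) * f n y)
    (n : ℕ) (x : ℝ) :
    ‖f n x‖ ≤ C * (2 * C ^ 2 / 3) ^ n / n.factorial * exp (-exp x - (6 * n + 1) * x / 2) := by
  induction n generalizing x with
  | zero =>
    simpa [hf0, sub_eq_add_neg, exp_add, neg_div, mul_assoc] using hg x
  | succ n ih =>
    set K := C * (2 * C ^ 2 / 3) ^ n / n.factorial
    have hb : (0 : ℝ) < 3 * (n + 1) := by positivity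
    have hintegrand : ∀ y, x < y →
        ‖(h x * g y - g x * h y) * (exp (-2 * y) : ℂ) * f n y‖ ≤
          2 * C ^ 2 * K * exp (-exp x - x / 2) * exp (-(3 * (n + 1)) * y) := by
      intro y hxy
      rw [norm_mul, norm_mul, Complex.norm_real, norm_of_nonneg (exp_pos _).le]
      calc ‖h x * g y - g x * h y‖ * exp (-2 * y) * ‖f n y‖
          ≤ 2 * C ^ 2 * exp (exp y - exp x - (x + y) / 2) * exp (-2 * y)
              * (K * exp (-exp y - (6 * n + 1) * y / 2)) := by
            gcongr
            · exact norm_mul_sub_mul_le hg hh hxy.le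
            · exact ih y
        _ = 2 * C ^ 2 * K * exp ((exp y - exp x - (x + y) / 2) + -2 * y
              + (-exp y - (6 * n + 1) * y / 2)) := by
            rw [exp_add, exp_add]; ring
        _ = 2 * C ^ 2 * K * exp (-exp x - x / 2) * exp (-(3 * (n + 1)) * y) := by
            rw [mul_assoc _ (exp _), ← exp_add]; ring_nf
    calc ‖f (n + 1) x‖
        ≤ 2 * C ^ 2 * K * exp (-exp x - x / 2) * (exp (-(3 * (n + 1)) * x) / (3 * (n + 1))) := by
          rw [hf n x]
          exact norm_setIntegral_Ioi_le_of_le_exp hb hintegrand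
      _ = C * (2 * C ^ 2 / 3) ^ (n + 1) / (n + 1).factorial
            * exp (-exp x - (6 * (n + 1 : ℕ) + 1) * x / 2) := by
          rw [mul_div_assoc', mul_assoc _ (exp _), ← exp_add, Nat.factorial_succ, pow_succ]
          simp only [K]
          push_cast
          field_simp
          ring_nf

end SuccessiveApproximations

theorem stmt_13_general (C : ℝ) (hC : 0 < C) (g h : ℝ → ℂ)
    (hg : ∀ x : ℝ, ‖g x‖ ≤ C * Real.exp (-Real.exp x) * Real.exp (-x / 2))
    (hh : ∀ x : ℝ, ‖h x‖ ≤ C * Real.exp (Real.exp x) * Real.exp (-x / 2))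
    (f : ℕ → ℝ → ℂ) (hf0 : f 0 = g)
    (hf : ∀ n : ℕ, ∀ x : ℝ,
      f (n + 1) x =
        ∫ y in Set.Ioi x, (h x * g y - g x * h y) * Real.exp (-2 * y) * f n y) :
    (∀ x : ℝ, Summable (fun n : ℕ => ‖f n x‖)) ∧
    (∀ x : ℝ, 0 ≤ x →
      ‖(∑' n : ℕ, f n x) - g x‖ ≤
        C * (Real.exp (2 * C ^ 2 / 3) - 1)
          * Real.exp (-Real.exp x) * Real.exp (-7 * x / 2)) := by
  have hbound := norm_successiveApprox_le hg hh hf0 hf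
  have hsumm : ∀ x, Summable fun n => ‖f n x‖ := by
    intro x
    refine .of_nonneg_of_le (fun n => norm_nonneg _) (fun n => (hbound n x).trans_eq ?_)
      ((Real.summable_pow_div_factorial (2 * C ^ 2 / 3 * exp (-3 * x))).mul_left
        (C * exp (-exp x - x / 2)))
    rw [show -exp x - (6 * n + 1) * x / 2 = -exp x - x / 2 + n * (-3 * x) by ring,
      exp_add, exp_nat_mul, mul_pow]
    ring
  refine ⟨hsumm, fun x hx => ?_⟩
  rw [← hf0]
  refine (norm_tsum_sub_zero_le_of_le_pow_div_factorial (A := C * exp (-exp x - 7 * x / 2))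
    (r := 2 * C ^ 2 / 3) (hsumm x) fun n => ?_).trans_eq ?_
  · refine (hbound (n + 1) x).trans ?_
    have hexp : exp (-exp x - (6 * (n + 1 : ℕ) + 1) * x / 2) ≤ exp (-exp x - 7 * x / 2) := by
      gcongr
      push_cast
      linarith [mul_nonneg (Nat.cast_nonneg n : (0 : ℝ) ≤ n) hx]
    calc _ ≤ C * (2 * C ^ 2 / 3) ^ (n + 1) / (n + 1).factorial * exp (-exp x - 7 * x / 2) := by
          gcongr
      _ = _ := by ring
  · rw [sub_eq_add_neg, exp_add, neg_mul, neg_div]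
    ring

/-- The series of successive approximations converges absolutely, and its sum `S`
satisfies `|S(x) − g(x)| ≤ C (e^{2C²/3} − 1) e^{−eˣ} e^{−7x/2}` for `x ≥ 0`. -/
theorem stmt_13 (C : ℝ) (hC : 0 < C) (g h : ℝ → ℂ)
    (hg_cont : Continuous g) (hh_cont : Continuous h)
    (hg : ∀ x : ℝ, ‖g x‖ ≤ C * Real.exp (-Real.exp x) * Real.exp (-x / 2))
    (hh : ∀ x : ℝ, ‖h x‖ ≤ C * Real.exp (Real.exp x) * Real.exp (-x / 2))
    (f : ℕ → ℝ → ℂ) (hf0 : f 0 = g)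
    (hf : ∀ n : ℕ, ∀ x : ℝ,
      f (n + 1) x =
        ∫ y in Set.Ioi x, (h x * g y - g x * h y) * Real.exp (-2 * y) * f n y) :
    (∀ x : ℝ, Summable (fun n : ℕ => ‖f n x‖)) ∧
    (∀ x : ℝ, 0 ≤ x →
      ‖(∑' n : ℕ, f n x) - g x‖ ≤
        C * (Real.exp (2 * C ^ 2 / 3) - 1)
          * Real.exp (-Real.exp x) * Real.exp (-7 * x / 2)) :=
  stmt_13_general C hC g h hg hh f hf0 hf
end
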